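/- As an identity of formal power series in q with coefficients in ℂ(z) (or for |q|<1 and z not a power of q), the following holds: Σ_{n∈ℤ} (-1)^n q^{n²+n} (1-z)(1-z^{-1}) / ((1-zq^n)(1-z^{-1}q^n)) = Σ_{n∈ℤ} (-1)^n q^{n²} (1-z)(1+2zq^n+z²q^{2n}) / ((1+z)(1-z²q^{2n})). -/

import Mathlib

open Complex

/-- The right-hand side term. -/
noncomputable def bterm (q z : ℂ) (n : ℤ) : ℂ :=
  (-1 : ℂ) ^ n * q ^ (n ^ 2) * (1 - z) * (1 + 2 * z * q ^ n + z ^ 2 * q ^ (2 * n)) /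
        ((1 + z) * (1 - z ^ 2 * q ^ (2 * n)))

/-- The core partial-fraction algebra, with `t = q^n`. -/
lemma key_alg (z t : ℂ) (h1 : 1 - z * t ≠ 0) (h2 : 1 + z * t ≠ 0)
    (h3 : t - z ≠ 0) (h4 : t + z ≠ 0) (h6 : 1 + z ≠ 0) :
    t * (1 - z) ^ 2 / ((1 - z * t) * (t - z)) =
      ((1 - z) * (1 + 2 * z * t + z ^ 2 * t ^ 2) / ((1 + z) * (1 - z ^ 2 * t ^ 2)) +
       (1 - z) * (t ^ 2 + 2 * z * t + z ^ 2) / ((1 + z) * (t ^ 2 - z ^ 2))) / 2 := by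
  have e1 : 1 - z ^ 2 * t ^ 2 = (1 - z * t) * (1 + z * t) := by ring
  have e2 : t ^ 2 - z ^ 2 = (t - z) * (t + z) := by ring
  rw [e1, e2]
  have hA : (1 + z) * ((1 - z * t) * (1 + z * t)) ≠ 0 := by
    exact mul_ne_zero h6 (mul_ne_zero h1 h2)
  have hB : (1 + z) * ((t - z) * (t + z)) ≠ 0 := by
    exact mul_ne_zero h6 (mul_ne_zero h3 h4)
  rw [div_add_div _ _ hA hB, div_div,
    div_eq_div_iff (mul_ne_zero h1 h3) (mul_ne_zero (mul_ne_zero hA hB) two_ne_zero)]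
  ring

set_option maxHeartbeats 1000000 in
/-- Partial-fraction identity between the two bilateral sums for the
overpartition rank generating function. -/
theorem bilateral_partial_fraction (q z : ℂ)
    (hq0 : 0 < ‖q‖) (hq1 : ‖q‖ < 1)
    (hz0 : z ≠ 0) (hzn1 : z ≠ -1)
    (hz : ∀ n : ℤ, z ≠ q ^ n ∧ z ≠ -q ^ n) :
    (∑' n : ℤ, (-1 : ℂ) ^ n * q ^ (n ^ 2 + n) * (1 - z) * (1 - z⁻¹) /
        ((1 - z * q ^ n) * (1 - z⁻¹ * q ^ n))) =
    ∑' n : ℤ, (-1 : ℂ) ^ n * q ^ (n ^ 2) * (1 - z) * (1 + 2 * z * q ^ n + z ^ 2 * q ^ (2 * n)) /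
        ((1 + z) * (1 - z ^ 2 * q ^ (2 * n))) := by
  have hq : q ≠ 0 := by
    intro h; rw [h] at hq0; simp at hq0
  have hq1' : ‖q‖ < 1 := by exact hq1
  have h6 : 1 + z ≠ 0 := by
    intro h; apply hzn1; linear_combination h
  -- denominator non-vanishing
  have hA : ∀ n : ℤ, q ^ n - z ≠ 0 := fun n => sub_ne_zero.mpr (Ne.symm (hz n).1)
  have hB : ∀ n : ℤ, q ^ n + z ≠ 0 := by
    intro n h
    exact (hz n).2 (by linear_combination h)
  have hm : ∀ n : ℤ, 1 - z * q ^ n ≠ 0 := by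
    intro n h
    apply hA (-n)
    rw [zpow_neg]
    exact sub_eq_zero_of_eq
      (eq_inv_of_mul_eq_one_left (by linear_combination -h : z * q ^ n = 1)).symm
  have hp : ∀ n : ℤ, 1 + z * q ^ n ≠ 0 := by
    intro n h
    apply hB (-n)
    rw [zpow_neg]
    have h2 : -z = (q ^ n)⁻¹ :=
      eq_inv_of_mul_eq_one_left (by linear_combination -h : -z * q ^ n = 1)
    rw [← h2]; ring
  have hmi : ∀ n : ℤ, 1 - z⁻¹ * q ^ n ≠ 0 := by
    intro n h
    apply hA n
    have h' : z⁻¹ * q ^ n = 1 := by linear_combination -h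
    field_simp at h'
    rw [h']
    ring
  have hden : ∀ n : ℤ, 1 - z ^ 2 * q ^ (2 * n) ≠ 0 := by
    intro n
    have : 1 - z ^ 2 * q ^ (2 * n) = (1 - z * q ^ n) * (1 + z * q ^ n) := by
      rw [two_mul, zpow_add₀ hq]; ring
    rw [this]
    exact mul_ne_zero (hm n) (hp n)
  have hden2 : ∀ n : ℤ, q ^ (2 * n) - z ^ 2 ≠ 0 := by
    intro n
    have : q ^ (2 * n) - z ^ 2 = (q ^ n - z) * (q ^ n + z) := by
      rw [two_mul, zpow_add₀ hq]; ring
    rw [this]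
    exact mul_ne_zero (hA n) (hB n)
  -- basics about signs and exponents
  have hsign : ∀ n : ℤ, (-1 : ℂ) ^ (-n) = (-1 : ℂ) ^ n := by
    intro n
    rw [zpow_neg]
    refine inv_eq_of_mul_eq_one_right ?_
    rw [← mul_zpow]
    norm_num
  have e2n : ∀ n : ℤ, q ^ (2 * n) = (q ^ n) ^ 2 := by
    intro n; rw [two_mul, zpow_add₀ hq, sq]
  -- rewrite `bterm (-n)`
  have hbneg_eq : ∀ n : ℤ, bterm q z (-n) =
      (-1 : ℂ) ^ n * q ^ (n ^ 2) * (1 - z) * (q ^ (2 * n) + 2 * z * q ^ n + z ^ 2) /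
        ((1 + z) * (q ^ (2 * n) - z ^ 2)) := by
    intro n
    have ht : (q : ℂ) ^ n ≠ 0 := zpow_ne_zero n hq
    have esq : (-n) ^ 2 = n ^ 2 := by ring
    have e1 : q ^ (2 * -n) = ((q ^ n)⁻¹) ^ 2 := by
      rw [show 2 * -n = -(2 * n) by ring, zpow_neg, e2n, inv_pow]
    have hu2 : ((q ^ n)⁻¹) ^ 2 ≠ 0 := pow_ne_zero 2 (inv_ne_zero ht)
    have c1 : 1 + 2 * z * (q ^ n)⁻¹ + z ^ 2 * ((q ^ n)⁻¹) ^ 2 =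
        ((q ^ n) ^ 2 + 2 * z * q ^ n + z ^ 2) * ((q ^ n)⁻¹) ^ 2 := by
      field_simp
    have c2 : 1 - z ^ 2 * ((q ^ n)⁻¹) ^ 2 = ((q ^ n) ^ 2 - z ^ 2) * ((q ^ n)⁻¹) ^ 2 := by
      field_simp
    unfold bterm
    rw [esq, hsign n, zpow_neg q n, e1, c1, c2, e2n]
    rw [show (-1 : ℂ) ^ n * q ^ n ^ 2 * (1 - z) *
        (((q ^ n) ^ 2 + 2 * z * q ^ n + z ^ 2) * ((q ^ n)⁻¹) ^ 2) =
        ((-1 : ℂ) ^ n * q ^ n ^ 2 * (1 - z) * ((q ^ n) ^ 2 + 2 * z * q ^ n + z ^ 2)) *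
          ((q ^ n)⁻¹) ^ 2 from by ring,
      show (1 + z) * (((q ^ n) ^ 2 - z ^ 2) * ((q ^ n)⁻¹) ^ 2) =
        ((1 + z) * ((q ^ n) ^ 2 - z ^ 2)) * ((q ^ n)⁻¹) ^ 2 from by ring,
      mul_div_mul_right _ _ hu2]
  -- termwise identity
  have hterm : ∀ n : ℤ,
      (-1 : ℂ) ^ n * q ^ (n ^ 2 + n) * (1 - z) * (1 - z⁻¹) /
        ((1 - z * q ^ n) * (1 - z⁻¹ * q ^ n)) = (bterm q z n + bterm q z (-n)) / 2 := by
    intro n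
    have ht : (q : ℂ) ^ n ≠ 0 := zpow_ne_zero n hq
    have hA' : q ^ n - z ≠ 0 := hA n
    have hm' := hm n
    have hmi' := hmi n
    have key := key_alg z (q ^ n) (hm n) (hp n) hA' (hB n) h6
    have step1 : (-1 : ℂ) ^ n * q ^ (n ^ 2 + n) * (1 - z) * (1 - z⁻¹) /
        ((1 - z * q ^ n) * (1 - z⁻¹ * q ^ n)) =
        ((-1 : ℂ) ^ n * q ^ (n ^ 2)) *
          (q ^ n * (1 - z) ^ 2 / ((1 - z * q ^ n) * (q ^ n - z))) := by
      have hzi : -z⁻¹ ≠ 0 := neg_ne_zero.mpr (inv_ne_zero hz0)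
      have ha : (1 : ℂ) - z⁻¹ = (1 - z) * -z⁻¹ := by
        field_simp
        ring
      have hb2 : (1 : ℂ) - z⁻¹ * q ^ n = (q ^ n - z) * -z⁻¹ := by
        field_simp
        ring
      rw [zpow_add₀ hq, ha, hb2]
      rw [show (-1 : ℂ) ^ n * (q ^ n ^ 2 * q ^ n) * (1 - z) * ((1 - z) * -z⁻¹) =
          ((-1 : ℂ) ^ n * q ^ n ^ 2 * (q ^ n * (1 - z) ^ 2)) * -z⁻¹ from by ring,
        show (1 - z * q ^ n) * ((q ^ n - z) * -z⁻¹) =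
          ((1 - z * q ^ n) * (q ^ n - z)) * -z⁻¹ from by ring,
        mul_div_mul_right _ _ hzi, mul_div_assoc]
    have step2 : bterm q z n =
        ((-1 : ℂ) ^ n * q ^ (n ^ 2)) *
          ((1 - z) * (1 + 2 * z * q ^ n + z ^ 2 * (q ^ n) ^ 2) /
            ((1 + z) * (1 - z ^ 2 * (q ^ n) ^ 2))) := by
      unfold bterm
      rw [e2n]
      ring
    have step3 : bterm q z (-n) =
        ((-1 : ℂ) ^ n * q ^ (n ^ 2)) *
          ((1 - z) * ((q ^ n) ^ 2 + 2 * z * q ^ n + z ^ 2) /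
            ((1 + z) * ((q ^ n) ^ 2 - z ^ 2))) := by
      rw [hbneg_eq n, e2n]
      ring
    rw [step1, step2, step3, key]
    ring
  -- cast to natural exponents
  have hcast : ∀ m : ℕ, bterm q z (m : ℤ) =
      (-1 : ℂ) ^ (m : ℕ) * q ^ (m ^ 2 : ℕ) * (1 - z) *
        (1 + 2 * z * q ^ (m : ℕ) + z ^ 2 * q ^ (2 * m : ℕ)) /
        ((1 + z) * (1 - z ^ 2 * q ^ (2 * m : ℕ))) := by
    intro m
    unfold bterm
    rw [show ((m : ℤ) ^ 2) = ((m ^ 2 : ℕ) : ℤ) by push_cast; ring,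
      show (2 * (m : ℤ)) = ((2 * m : ℕ) : ℤ) by push_cast; ring]
    norm_cast
  have hcastneg : ∀ m : ℕ, bterm q z (-(m : ℤ)) =
      (-1 : ℂ) ^ (m : ℕ) * q ^ (m ^ 2 : ℕ) * (1 - z) *
        (q ^ (2 * m : ℕ) + 2 * z * q ^ (m : ℕ) + z ^ 2) /
        ((1 + z) * (q ^ (2 * m : ℕ) - z ^ 2)) := by
    intro m
    rw [hbneg_eq (m : ℤ),
      show ((m : ℤ) ^ 2) = ((m ^ 2 : ℕ) : ℤ) by push_cast; ring,
      show (2 * (m : ℤ)) = ((2 * m : ℕ) : ℤ) by push_cast; ring]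
    norm_cast
  -- numerical constants
  set C1 : ℝ := ‖(1 : ℂ) - z‖ * (1 + 2 * ‖z‖ + ‖z‖ ^ 2) with hC1
  have hC1nonneg : 0 ≤ C1 := by positivity
  have hzpos : 0 < ‖z‖ := norm_pos_iff.mpr hz0
  have h6pos : 0 < ‖(1 : ℂ) + z‖ := norm_pos_iff.mpr h6
  have hqn : ∀ m : ℕ, ‖q ^ (m : ℕ)‖ ≤ 1 := fun m => by
    rw [norm_pow]; exact pow_le_one₀ (norm_nonneg q) hq1'.le
  have hnum : ∀ m : ℕ, ‖(1 : ℂ) + 2 * z * q ^ (m : ℕ) + z ^ 2 * q ^ (2 * m : ℕ)‖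
      ≤ 1 + 2 * ‖z‖ + ‖z‖ ^ 2 := by
    intro m
    refine (norm_add_le _ _).trans ?_
    refine add_le_add ((norm_add_le _ _).trans (add_le_add ?_ ?_)) ?_
    · simp
    · rw [norm_mul, norm_mul]
      calc ‖(2:ℂ)‖ * ‖z‖ * ‖q ^ m‖ ≤ ‖(2:ℂ)‖ * ‖z‖ * 1 := by
            have := hqn m
            gcongr
        _ = 2 * ‖z‖ := by norm_num
    · rw [norm_mul, norm_pow]
      calc ‖z‖ ^ 2 * ‖q ^ (2 * m)‖ ≤ ‖z‖ ^ 2 * 1 := by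
            have := hqn (2 * m)
            have h2m : ‖q ^ (2 * m : ℕ)‖ ≤ 1 := hqn (2 * m)
            gcongr
        _ = ‖z‖ ^ 2 := by ring
  have hnum' : ∀ m : ℕ, ‖q ^ (2 * m : ℕ) + 2 * z * q ^ (m : ℕ) + z ^ 2‖
      ≤ 1 + 2 * ‖z‖ + ‖z‖ ^ 2 := by
    intro m
    refine (norm_add_le _ _).trans ?_
    refine add_le_add ((norm_add_le _ _).trans (add_le_add ?_ ?_)) ?_
    · exact hqn (2 * m)
    · rw [norm_mul, norm_mul]
      calc ‖(2:ℂ)‖ * ‖z‖ * ‖q ^ m‖ ≤ ‖(2:ℂ)‖ * ‖z‖ * 1 := by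
            have := hqn m
            gcongr
        _ = 2 * ‖z‖ := by norm_num
    · rw [norm_pow]
  have hqm2 : ∀ m : ℕ, 1 ≤ m → ‖q‖ ^ (m ^ 2 : ℕ) ≤ ‖q‖ ^ m := by
    intro m hm
    exact pow_le_pow_of_le_one (norm_nonneg q) hq1'.le (Nat.le_self_pow two_ne_zero m)
  -- choose the tail cutoff
  obtain ⟨N₀, hN₀⟩ := exists_pow_lt_of_lt_one
    (show (0:ℝ) < min (1 / (2 * (‖z‖ ^ 2 + 1))) (‖z‖ ^ 2 / 2) by positivity) hq1'
  set N : ℕ := N₀ + 1 with hN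
  have hNle : ‖q‖ ^ N ≤ ‖q‖ ^ N₀ :=
    pow_le_pow_of_le_one (norm_nonneg q) hq1'.le (by omega)
  -- summability of the positive-index part
  have hsum_geo : Summable (fun n : ℕ => (C1 / (‖(1:ℂ) + z‖ * (1 / 2))) * ‖q‖ ^ n) :=
    (summable_geometric_of_lt_one (norm_nonneg q) hq1').mul_left _
  have hsum_pos : Summable (fun m : ℕ => bterm q z (m : ℤ)) := by
    rw [← summable_nat_add_iff N]
    apply Summable.of_norm_bounded hsum_geo
    intro n
    set m : ℕ := n + N with hmdef
    have hm1 : 1 ≤ m := by omega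
    have hsmall : ‖z‖ ^ 2 * ‖q‖ ^ (2 * m : ℕ) ≤ 1 / 2 := by
      have h1 : ‖q‖ ^ (2 * m : ℕ) ≤ ‖q‖ ^ N₀ :=
        pow_le_pow_of_le_one (norm_nonneg q) hq1'.le (by omega)
      have h2 : ‖q‖ ^ N₀ ≤ 1 / (2 * (‖z‖ ^ 2 + 1)) :=
        (hN₀.trans_le (min_le_left _ _)).le
      calc ‖z‖ ^ 2 * ‖q‖ ^ (2 * m : ℕ) ≤ ‖z‖ ^ 2 * (1 / (2 * (‖z‖ ^ 2 + 1))) := by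
            gcongr; exact h1.trans h2
        _ ≤ 1 / 2 := by
            rw [mul_one_div, div_le_div_iff₀ (by positivity) (by norm_num : (0:ℝ) < 2)]
            nlinarith [sq_nonneg ‖z‖]
    have hd : 1 / 2 ≤ ‖(1:ℂ) - z ^ 2 * q ^ (2 * m : ℕ)‖ := by
      have h1 : ‖z ^ 2 * q ^ (2 * m : ℕ)‖ ≤ 1 / 2 := by
        rw [norm_mul, norm_pow, norm_pow]; exact hsmall
      have h2 := norm_sub_norm_le (1 : ℂ) (z ^ 2 * q ^ (2 * m : ℕ))
      simp only [norm_one] at h2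
      linarith
    calc ‖bterm q z ((n + N : ℕ) : ℤ)‖
        = ‖q‖ ^ (m ^ 2 : ℕ) * ‖(1:ℂ) - z‖ *
            ‖(1 : ℂ) + 2 * z * q ^ (m : ℕ) + z ^ 2 * q ^ (2 * m : ℕ)‖ /
            (‖(1:ℂ) + z‖ * ‖(1:ℂ) - z ^ 2 * q ^ (2 * m : ℕ)‖) := by
          rw [hcast m, norm_div, norm_mul, norm_mul, norm_mul, norm_mul, norm_pow,
            norm_pow, norm_neg, norm_one, one_pow, one_mul]
      _ ≤ (‖q‖ ^ m * ‖(1:ℂ) - z‖ * (1 + 2 * ‖z‖ + ‖z‖ ^ 2)) / (‖(1:ℂ) + z‖ * (1 / 2)) := by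
          apply div_le_div₀ (by positivity) ?_ (by positivity) ?_
          · have := hqm2 m hm1
            have := hnum m
            gcongr
          · gcongr
      _ = (C1 / (‖(1:ℂ) + z‖ * (1 / 2))) * ‖q‖ ^ m := by
          rw [hC1]; ring
      _ ≤ (C1 / (‖(1:ℂ) + z‖ * (1 / 2))) * ‖q‖ ^ n :=
          mul_le_mul_of_nonneg_left
            (pow_le_pow_of_le_one (norm_nonneg q) hq1'.le (by omega)) (by positivity)
  -- summability of the negative-index part
  have hsum_geo' : Summable (fun n : ℕ => (C1 / (‖(1:ℂ) + z‖ * (‖z‖ ^ 2 / 2))) * ‖q‖ ^ n) :=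
    (summable_geometric_of_lt_one (norm_nonneg q) hq1').mul_left _
  have hsum_neg : Summable (fun m : ℕ => bterm q z (-(m : ℤ))) := by
    rw [← summable_nat_add_iff N]
    apply Summable.of_norm_bounded hsum_geo'
    intro n
    set m : ℕ := n + N with hmdef
    have hm1 : 1 ≤ m := by omega
    have hsmall : ‖q‖ ^ (2 * m : ℕ) ≤ ‖z‖ ^ 2 / 2 := by
      have h1 : ‖q‖ ^ (2 * m : ℕ) ≤ ‖q‖ ^ N₀ :=
        pow_le_pow_of_le_one (norm_nonneg q) hq1'.le (by omega)
      exact h1.trans (hN₀.trans_le (min_le_right _ _)).le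
    have hd : ‖z‖ ^ 2 / 2 ≤ ‖q ^ (2 * m : ℕ) - z ^ 2‖ := by
      have h2 := norm_sub_norm_le (z ^ 2) (q ^ (2 * m : ℕ))
      rw [← norm_neg (z ^ 2 - q ^ (2 * m : ℕ))] at h2
      simp only [neg_sub] at h2
      rw [norm_pow, norm_pow] at h2
      linarith
    calc ‖bterm q z (-((n + N : ℕ) : ℤ))‖
        = ‖q‖ ^ (m ^ 2 : ℕ) * ‖(1:ℂ) - z‖ *
            ‖q ^ (2 * m : ℕ) + 2 * z * q ^ (m : ℕ) + z ^ 2‖ /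
            (‖(1:ℂ) + z‖ * ‖q ^ (2 * m : ℕ) - z ^ 2‖) := by
          rw [hcastneg m, norm_div, norm_mul, norm_mul, norm_mul, norm_mul, norm_pow,
            norm_pow, norm_neg, norm_one, one_pow, one_mul]
      _ ≤ (‖q‖ ^ m * ‖(1:ℂ) - z‖ * (1 + 2 * ‖z‖ + ‖z‖ ^ 2)) /
            (‖(1:ℂ) + z‖ * (‖z‖ ^ 2 / 2)) := by
          apply div_le_div₀ (by positivity) ?_ (by positivity) ?_
          · have := hqm2 m hm1
            have := hnum' m
            gcongr
          · gcongr
      _ = (C1 / (‖(1:ℂ) + z‖ * (‖z‖ ^ 2 / 2))) * ‖q‖ ^ m := by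
          rw [hC1]; ring
      _ ≤ (C1 / (‖(1:ℂ) + z‖ * (‖z‖ ^ 2 / 2))) * ‖q‖ ^ n :=
          mul_le_mul_of_nonneg_left
            (pow_le_pow_of_le_one (norm_nonneg q) hq1'.le (by omega)) (by positivity)
  -- summability over ℤ
  have hb : Summable (bterm q z) := by
    have h3 : Summable (fun n : ℕ => bterm q z (-((n : ℤ) + 1))) := by
      have h4 : Summable (fun n : ℕ => bterm q z (-(((n + 1 : ℕ)) : ℤ))) :=
        (summable_nat_add_iff (f := fun m : ℕ => bterm q z (-(m : ℤ))) 1).mpr hsum_neg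
      refine h4.congr fun n => ?_
      congr 1
    exact Summable.of_nat_of_neg_add_one (f := bterm q z) hsum_pos h3
  have hbneg : Summable (fun n : ℤ => bterm q z (-n)) :=
    (Equiv.neg ℤ).summable_iff.mpr hb
  calc (∑' n : ℤ, (-1 : ℂ) ^ n * q ^ (n ^ 2 + n) * (1 - z) * (1 - z⁻¹) /
        ((1 - z * q ^ n) * (1 - z⁻¹ * q ^ n)))
      = ∑' n : ℤ, (bterm q z n + bterm q z (-n)) / 2 := tsum_congr hterm
    _ = (∑' n : ℤ, (bterm q z n + bterm q z (-n))) / 2 := by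
        rw [tsum_div_const]
    _ = ((∑' n : ℤ, bterm q z n) + ∑' n : ℤ, bterm q z (-n)) / 2 := by
        rw [Summable.tsum_add hb hbneg]
    _ = ((∑' n : ℤ, bterm q z n) + ∑' n : ℤ, bterm q z n) / 2 := by
        congr 2
        exact (Equiv.neg ℤ).tsum_eq (bterm q z)
    _ = ∑' n : ℤ, bterm q z n := by ring
    _ = _ := by
        apply tsum_congr
        intro n
        rw [bterm]
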